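/- arXiv:math-ph/0312068 — 2 statements merged into one kernel-verified Lean document; each statement's English description precedes it below -/
import Mathlib

section
/- The composition s₀ ∘ s₁ has order two: (s₀ s₁)² = id, i.e., at every point where all denominators occurring in the fourfold composition are nonzero, applying s₀, s₁, s₀, s₁ in succession returns the original point. -/
open Finset

noncomputable section

/-- A point `(ε, q, p, x) ∈ ℂ^{n+3} × ℂⁿ × ℂⁿ × ℂⁿ`, where `n = m + 2` (so `n ≥ 2`).
Indices are 0-based: `e ⟨j-1,_⟩` is the paper's `ε_j`, etc. -/
structure GPt (m : ℕ) where
  e : Fin (m + 5) → ℂ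
  q : Fin (m + 2) → ℂ
  p : Fin (m + 2) → ℂ
  x : Fin (m + 2) → ℂ

namespace GPt

variable {m : ℕ}

/-- `Q₁ = Σ_{l=1}^n q_l p_l + (1 − Σ_{l=1}^{n+3} ε_l)/2`. -/
def Q1 (P : GPt m) : ℂ := (∑ l, P.q l * P.p l) + (1 - ∑ j, P.e j) / 2

/-- `Q₂ = Σ_{j=1}^n q_j − 1`. -/
def Q2 (P : GPt m) : ℂ := (∑ j, P.q j) - 1

/-- The index of `ε_{j+3}` (paper numbering) for `j` indexing `q, p, x`. -/
def eIdx (j : Fin (m + 2)) : Fin (m + 5) := ⟨j.val + 3, by omega⟩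

/-- The transformation `s₀`. -/
def s0 (P : GPt m) : GPt m where
  e := fun j => if j = 0 then 1 - P.e 1 else if j = 1 then 1 - P.e 0 else P.e j
  q := fun j => P.p j * (P.q j * P.p j - P.e (eIdx j)) / (P.Q1 * (P.Q1 + P.e 2))
  p := fun j => -(P.Q1 * (P.Q1 + P.e 2)) / P.p j
  x := fun i => 1 / P.x i

/-- The transformation `s₁`. -/
def s1 (P : GPt m) : GPt m where
  e := fun j => P.e (Equiv.swap 0 1 j)
  q := fun j => P.q j / P.x j
  p := fun j => P.x j * P.p j
  x := fun i => 1 / P.x i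

/-- The transformation `s₂`. -/
def s2 (P : GPt m) : GPt m where
  e := fun j => P.e (Equiv.swap 1 2 j)
  q := fun j => P.q j / P.Q2
  p := fun j => (P.p j - P.Q1) * P.Q2
  x := fun i => P.x i / (P.x i - 1)

/-- The transformation `s₃`. -/
def s3 (P : GPt m) : GPt m where
  e := fun j => P.e (Equiv.swap 2 3 j)
  q := fun j => if j = 0 then 1 / P.q 0 else -P.q j / P.q 0
  p := fun j => if j = 0 then -(P.q 0 * P.Q1) else -(P.q 0 * P.p j)
  x := fun i => if i = 0 then 1 / P.x 0 else P.x i / P.x 0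

/-- The transformation `s_k` for `4 ≤ k ≤ n+2`: `ε_k ↔ ε_{k+1}` together with
`(q_{k-3}, p_{k-3}, x_{k-3}) ↔ (q_{k-2}, p_{k-2}, x_{k-2})` (paper numbering). -/
def sMid (k : ℕ) (h : 4 ≤ k ∧ k ≤ m + 4) (P : GPt m) : GPt m where
  e := fun j => P.e (Equiv.swap ⟨k - 1, by omega⟩ ⟨k, by omega⟩ j)
  q := fun j => P.q (Equiv.swap ⟨k - 4, by omega⟩ ⟨k - 3, by omega⟩ j)
  p := fun j => P.p (Equiv.swap ⟨k - 4, by omega⟩ ⟨k - 3, by omega⟩ j)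
  x := fun j => P.x (Equiv.swap ⟨k - 4, by omega⟩ ⟨k - 3, by omega⟩ j)

/-- The transformation `s_{n+3}`: `ε_{n+3} ↦ −ε_{n+3}`, `p_n ↦ p_n − ε_{n+3}/q_n`. -/
def sLast (P : GPt m) : GPt m where
  e := Function.update P.e ⟨m + 4, by omega⟩ (-(P.e ⟨m + 4, by omega⟩))
  q := P.q
  p := Function.update P.p (Fin.last (m + 1))
    (P.p (Fin.last (m + 1)) - P.e ⟨m + 4, by omega⟩ / P.q (Fin.last (m + 1)))
  x := P.x

/-- The family `s_k`, `k = 0, 1, …, n+3` (junk value `id` for `k > n+3`). -/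
def s (k : ℕ) (P : GPt m) : GPt m :=
  if k = 0 then P.s0
  else if k = 1 then P.s1
  else if k = 2 then P.s2
  else if k = 3 then P.s3
  else if h : 4 ≤ k ∧ k ≤ m + 4 then sMid k h P
  else if k = m + 5 then P.sLast
  else P

/-- The nonvanishing, at a given point, of all denominators occurring in `s_k`. -/
def Dfd (k : ℕ) (P : GPt m) : Prop :=
  if k = 0 then
    (∀ j, P.p j ≠ 0) ∧ P.Q1 ≠ 0 ∧ P.Q1 + P.e 2 ≠ 0 ∧ (∀ i, P.x i ≠ 0)
  else if k = 1 then ∀ i, P.x i ≠ 0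
  else if k = 2 then P.Q2 ≠ 0 ∧ ∀ i, P.x i ≠ 1
  else if k = 3 then P.q 0 ≠ 0 ∧ P.x 0 ≠ 0
  else if k = m + 5 then P.q (Fin.last (m + 1)) ≠ 0
  else True

/-- Apply `s_{k₁}, s_{k₂}, …` in succession. -/
def chain : List ℕ → GPt m → GPt m
  | [], P => P
  | k :: ks, P => chain ks (s k P)

/-- All denominators occurring in the successive application of
`s_{k₁}, s_{k₂}, …` are nonzero. -/
def chainDfd : List ℕ → GPt m → Prop
  | [], _ => True
  | k :: ks, P => Dfd k P ∧ chainDfd ks (s k P)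

end GPt

open GPt

namespace GPt

variable {m : ℕ}

/-- Nonvanishing of all denominators occurring in `s₀`. -/
def Dfd0 (P : GPt m) : Prop :=
  (∀ j, P.p j ≠ 0) ∧ P.Q1 ≠ 0 ∧ P.Q1 + P.e 2 ≠ 0 ∧ (∀ i, P.x i ≠ 0)

/-- Nonvanishing of all denominators occurring in `s₁`. -/
def Dfd1 (P : GPt m) : Prop := ∀ i, P.x i ≠ 0

/-- Nonvanishing of all denominators occurring in `s₂`. -/
def Dfd2 (P : GPt m) : Prop := P.Q2 ≠ 0 ∧ ∀ i, P.x i ≠ 1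

/-- Nonvanishing of all denominators occurring in `s₃`. -/
def Dfd3 (P : GPt m) : Prop := P.q 0 ≠ 0 ∧ P.x 0 ≠ 0

/-- Nonvanishing of all denominators occurring in `s_{n+3}`. -/
def DfdLast (P : GPt m) : Prop := P.q (Fin.last (m + 1)) ≠ 0

end GPt

/-!
`s₀` and `s₁` are commuting involutions wherever they are defined, so `(s₀ s₁)² = s₀² s₁² = id`.
The only nontrivial point is the denominator `Q₁(Q₁ + ε₃)` of `s₀`: `s₁` fixes every product
`q_j p_j`, hence `Q₁`, while `s₀` sends `q_j p_j ↦ ε_{j+3} − q_j p_j` and `ε₁ + ε₂ ↦ 2 − ε₁ − ε₂`,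
hence `Q₁ ↦ −(Q₁ + ε₃)`, which leaves `Q₁(Q₁ + ε₃)` unchanged.
-/

namespace GPt

variable {m : ℕ}

@[ext]
protected lemma ext {P Q : GPt m} (he : P.e = Q.e) (hq : P.q = Q.q) (hp : P.p = Q.p)
    (hx : P.x = Q.x) : P = Q := by
  cases P; cases Q; congr

lemma eIdx_ne_zero (j : Fin (m + 2)) : eIdx j ≠ 0 :=
  Fin.ne_of_val_ne (by simp [eIdx])

lemma eIdx_ne_one (j : Fin (m + 2)) : eIdx j ≠ 1 :=
  Fin.ne_of_val_ne (by simp [eIdx])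

lemma fin_two_ne_zero : (2 : Fin (m + 5)) ≠ 0 :=
  Fin.ne_of_val_ne (by simp [Nat.mod_eq_of_lt (show 2 < m + 5 by omega)])

lemma fin_two_ne_one : (2 : Fin (m + 5)) ≠ 1 :=
  Fin.ne_of_val_ne (by simp [Nat.mod_eq_of_lt (show 2 < m + 5 by omega)])

lemma sum_eq_add_sum_eIdx (g : Fin (m + 5) → ℂ) :
    ∑ j, g j = g 0 + g 1 + g 2 + ∑ j, g (eIdx j) := by
  rw [Fin.sum_univ_succ, Fin.sum_univ_succ, Fin.sum_univ_succ]
  simp only [add_assoc]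
  rfl

section s1

variable (P : GPt m)

lemma s1_e_two : P.s1.e 2 = P.e 2 := by
  simp only [s1, Equiv.swap_apply_of_ne_of_ne fin_two_ne_zero fin_two_ne_one]

lemma s1_e_eIdx (j : Fin (m + 2)) : P.s1.e (eIdx j) = P.e (eIdx j) := by
  simp only [s1, Equiv.swap_apply_of_ne_of_ne (eIdx_ne_zero j) (eIdx_ne_one j)]

lemma Q1_s1 (hx : ∀ i, P.x i ≠ 0) : P.s1.Q1 = P.Q1 := by
  have hqp : ∀ j, P.s1.q j * P.s1.p j = P.q j * P.p j := fun j => by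
    simp only [s1]
    field_simp [hx j]
  have he : ∑ j, P.s1.e j = ∑ j, P.e j := Equiv.sum_comp (Equiv.swap 0 1) P.e
  simp only [Q1, hqp, he]

lemma s1_s1 (hx : ∀ i, P.x i ≠ 0) : P.s1.s1 = P := by
  ext j
  · simp only [s1, Equiv.swap_apply_self]
  · simp only [s1]
    field_simp [hx j]
  · simp only [s1]
    field_simp [hx j]
  · simp only [s1, one_div_one_div]

end s1

section s0

variable (P : GPt m)

lemma s0_q (j : Fin (m + 2)) :
    P.s0.q j = P.p j * (P.q j * P.p j - P.e (eIdx j)) / (P.Q1 * (P.Q1 + P.e 2)) := rfl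

lemma s0_p (j : Fin (m + 2)) : P.s0.p j = -(P.Q1 * (P.Q1 + P.e 2)) / P.p j := rfl

lemma s0_e_two : P.s0.e 2 = P.e 2 := by
  simp only [s0, if_neg fin_two_ne_zero, if_neg fin_two_ne_one]

lemma s0_e_eIdx (j : Fin (m + 2)) : P.s0.e (eIdx j) = P.e (eIdx j) := by
  simp only [s0, if_neg (eIdx_ne_zero j), if_neg (eIdx_ne_one j)]

variable {P}

lemma s0_q_mul_s0_p (hp : ∀ j, P.p j ≠ 0) (hQ : P.Q1 ≠ 0) (hQe : P.Q1 + P.e 2 ≠ 0)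
    (j : Fin (m + 2)) : P.s0.q j * P.s0.p j = P.e (eIdx j) - P.q j * P.p j := by
  rw [s0_q, s0_p]
  field_simp [hp j, hQ, hQe]
  ring

lemma Q1_s0 (hp : ∀ j, P.p j ≠ 0) (hQ : P.Q1 ≠ 0) (hQe : P.Q1 + P.e 2 ≠ 0) :
    P.s0.Q1 = -(P.Q1 + P.e 2) := by
  have he0 : P.s0.e 0 = 1 - P.e 1 := rfl
  have he1 : P.s0.e 1 = 1 - P.e 0 := by simp [s0]
  simp only [Q1, s0_q_mul_s0_p hp hQ hQe, Finset.sum_sub_distrib]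
  rw [sum_eq_add_sum_eIdx P.s0.e, sum_eq_add_sum_eIdx P.e, he0, he1, s0_e_two]
  simp only [s0_e_eIdx]
  ring

lemma Q1_mul_Q1_add_e_two_s0 (hp : ∀ j, P.p j ≠ 0) (hQ : P.Q1 ≠ 0)
    (hQe : P.Q1 + P.e 2 ≠ 0) : P.s0.Q1 * (P.s0.Q1 + P.s0.e 2) = P.Q1 * (P.Q1 + P.e 2) := by
  rw [Q1_s0 hp hQ hQe, s0_e_two]
  ring

lemma s0_s0 (hp : ∀ j, P.p j ≠ 0) (hQ : P.Q1 ≠ 0) (hQe : P.Q1 + P.e 2 ≠ 0) :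
    P.s0.s0 = P := by
  ext j
  · simp only [s0]
    split_ifs <;> simp_all
  · rw [s0_q, s0_q_mul_s0_p hp hQ hQe, s0_e_eIdx, Q1_mul_Q1_add_e_two_s0 hp hQ hQe, s0_p]
    field_simp [hp j, hQ, hQe]
    ring
  · rw [s0_p, Q1_mul_Q1_add_e_two_s0 hp hQ hQe, s0_p]
    field_simp [hp j, hQ, hQe]
  · simp only [s0, one_div_one_div]

end s0

lemma s1_s0_comm (P : GPt m) (hx : ∀ i, P.x i ≠ 0) : P.s1.s0 = P.s0.s1 := by
  ext j
  · by_cases h0 : j = 0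
    · subst h0; simp [s0, s1]
    by_cases h1 : j = 1
    · subst h1; simp [s0, s1]
    simp only [s0, s1, Equiv.swap_apply_of_ne_of_ne h0 h1, if_neg h0, if_neg h1]
  · rw [s0_q, s1_e_eIdx, Q1_s1 P hx, s1_e_two]
    simp only [s0, s1]
    field_simp [hx j]
  · rw [s0_p, Q1_s1 P hx, s1_e_two]
    simp only [s0, s1]
    field_simp
  · rfl

end GPt

theorem s0_s1_order_two_general (m : ℕ) (P : GPt m) (h0 : Dfd0 P) :
    P.s0.s1.s0.s1 = P := by
  obtain ⟨hp, hQ, hQe, hx⟩ := h0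
  have hx_s0 : ∀ i, P.s0.x i ≠ 0 := fun i => one_div_ne_zero (hx i)
  rw [s1_s0_comm P.s0 hx_s0, s0_s0 hp hQ hQe, s1_s1 P hx]

/-- `(s₀ s₁)² = id`: at every point where all denominators occurring in the
fourfold composition are nonzero, applying `s₀, s₁, s₀, s₁` in succession
returns the original point. -/
theorem s0_s1_order_two (m : ℕ) (P : GPt m)
    (h0 : Dfd0 P) (h1 : Dfd1 P.s0) (h2 : Dfd0 P.s0.s1) (h3 : Dfd1 P.s0.s1.s0) :
    P.s0.s1.s0.s1 = P :=
  s0_s1_order_two_general m P h0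
end
end

section
/- The composition s₂ ∘ s₃ has order three: (s₂ s₃)³ = id, i.e., at every point where all denominators occurring in the sixfold composition are nonzero, applying s₂, s₃ alternately three times each returns the original point. -/
open Finset

noncomputable section

open GPt

/-!
Write `T = s₃ ∘ s₂`. Since `s₂` sends `Q₂ ↦ Q₂⁻¹`, `Q₁ ↦ -Q₁Q₂` and `s₃` sends `Q₂ ↦ -Q₂/q₁`,
`Q₁ ↦ -q₁p₁`, one step of `T` is given by closed formulas in `q₁, Q₂, Q₁, p, x` alone, e.g.
`(q₁, Q₂) ↦ (Q₂/q₁, -1/q₁)` and `x₁ ↦ 1 - 1/x₁`; these are visibly of order three, and on `ε`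
the map `T` is the 3-cycle `(ε₂ ε₃ ε₄)`.
-/

open Equiv

theorem Equiv.swap_mul_swap_pow_three {α : Type*} [DecidableEq α] {a b c : α} (hab : a ≠ b)
    (hac : a ≠ c) (hbc : b ≠ c) : (swap a b * swap b c) ^ 3 = 1 := by
  ext x
  simp only [pow_succ, pow_zero, one_mul, Perm.mul_apply, Perm.one_apply, swap_apply_def]
  grind

namespace GPt

attribute [ext] GPt

variable {m : ℕ} (P : GPt m)

theorem sum_q : ∑ j, P.q j = P.Q2 + 1 := by simp [Q2]

theorem sum_q_mul_p : ∑ l, P.q l * P.p l = P.Q1 - (1 - ∑ j, P.e j) / 2 := by simp [Q1]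

theorem Q1_s2 (hQ2 : P.Q2 ≠ 0) : P.s2.Q1 = -(P.Q1 * P.Q2) := by
  have hqp : ∀ l, P.q l / P.Q2 * ((P.p l - P.Q1) * P.Q2) = P.q l * P.p l - P.Q1 * P.q l := by
    intro l; field_simp
  have h : P.s2.Q1 = ∑ l, P.q l / P.Q2 * ((P.p l - P.Q1) * P.Q2)
      + (1 - ∑ j, P.e (swap 1 2 j)) / 2 := rfl
  rw [h, Equiv.sum_comp, Finset.sum_congr rfl fun l _ => hqp l, Finset.sum_sub_distrib,
    ← Finset.mul_sum, sum_q, sum_q_mul_p]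
  ring

theorem Q2_s2 (hQ2 : P.Q2 ≠ 0) : P.s2.Q2 = P.Q2⁻¹ := by
  have h : P.s2.Q2 = (∑ j, P.q j) / P.Q2 - 1 := by simp only [Q2, s2, ← Finset.sum_div]
  rw [h, sum_q]
  field_simp
  ring

theorem Q1_s3 (hq0 : P.q 0 ≠ 0) : P.s3.Q1 = -(P.q 0 * P.p 0) := by
  have hqp : ∀ i : Fin (m + 1), P.s3.q i.succ * P.s3.p i.succ = P.q i.succ * P.p i.succ := by
    intro i
    simp only [s3, Fin.succ_ne_zero, if_false]
    field_simp
  have h : P.s3.Q1 = ∑ l, P.s3.q l * P.s3.p l + (1 - ∑ j, P.e (swap 2 3 j)) / 2 := rfl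
  have h0 : P.s3.q 0 * P.s3.p 0 = -P.Q1 := by simp only [s3, if_true]; field_simp
  have hs : ∑ i : Fin (m + 1), P.q i.succ * P.p i.succ = ∑ l, P.q l * P.p l - P.q 0 * P.p 0 :=
    eq_sub_of_add_eq' (Fin.sum_univ_succ fun l => P.q l * P.p l).symm
  rw [h, Equiv.sum_comp, Fin.sum_univ_succ, h0, Finset.sum_congr rfl fun i _ => hqp i, hs,
    sum_q_mul_p]
  ring

theorem Q2_s3 (hq0 : P.q 0 ≠ 0) : P.s3.Q2 = -P.Q2 / P.q 0 := by
  have h : P.s3.Q2 = 1 / P.q 0 + ∑ i : Fin (m + 1), -P.q i.succ / P.q 0 - 1 := by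
    simp only [Q2, s3, Fin.sum_univ_succ, Fin.succ_ne_zero, if_true, if_false]
  have hs : ∑ i : Fin (m + 1), P.q i.succ = P.Q2 + 1 - P.q 0 := by
    rw [← sum_q]; exact eq_sub_of_add_eq' (Fin.sum_univ_succ P.q).symm
  rw [h, ← Finset.sum_div, Finset.sum_neg_distrib, hs]
  field_simp
  ring

theorem s2_s3_e (j : Fin (m + 5)) :
    P.s2.s3.e j = P.e ((swap 1 2 * swap 2 3 : Perm (Fin (m + 5))) j) := rfl

theorem s2_s3_q_zero : P.s2.s3.q 0 = P.Q2 / P.q 0 := by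
  simp [s2, s3]

theorem s2_s3_q_of_ne_zero (hQ2 : P.Q2 ≠ 0) {j : Fin (m + 2)} (hj : j ≠ 0) :
    P.s2.s3.q j = -P.q j / P.q 0 := by
  simp only [s2, s3, hj, if_false]
  field_simp

theorem s2_s3_Q2 (hQ2 : P.Q2 ≠ 0) (hq0 : P.q 0 ≠ 0) : P.s2.s3.Q2 = -1 / P.q 0 := by
  rw [Q2_s3 _ (div_ne_zero hq0 hQ2), Q2_s2 _ hQ2]
  simp only [s2]
  field_simp

theorem s2_s3_Q1 (hQ2 : P.Q2 ≠ 0) (hq0 : P.q 0 ≠ 0) :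
    P.s2.s3.Q1 = P.q 0 * (P.Q1 - P.p 0) := by
  rw [Q1_s3 _ (div_ne_zero hq0 hQ2)]
  simp only [s2]
  field_simp
  ring

theorem s2_s3_p_zero (hQ2 : P.Q2 ≠ 0) : P.s2.s3.p 0 = P.q 0 * P.Q1 := by
  simp only [s3, if_true, Q1_s2 _ hQ2]
  simp only [s2]
  field_simp

theorem s2_s3_p_of_ne_zero (hQ2 : P.Q2 ≠ 0) {j : Fin (m + 2)} (hj : j ≠ 0) :
    P.s2.s3.p j = P.q 0 * (P.Q1 - P.p j) := by
  simp only [s2, s3, hj, if_false]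
  field_simp
  ring

theorem s2_s3_x_zero : P.s2.s3.x 0 = (P.x 0 - 1) / P.x 0 := by
  simp [s2, s3]

theorem s2_s3_x_of_ne_zero {j : Fin (m + 2)} (hj : j ≠ 0) :
    P.s2.s3.x j = P.x j * (P.x 0 - 1) / ((P.x j - 1) * P.x 0) := by
  simp only [s2, s3, hj, if_false]
  exact div_div_div_eq _ _ _ _

theorem s2_s3_x_zero_sub_one (hx0 : P.x 0 ≠ 0) : P.s2.s3.x 0 - 1 = -1 / P.x 0 := by
  rw [s2_s3_x_zero]; field_simp; ring

theorem s2_s3_x_sub_one_of_ne_zero (hx0 : P.x 0 ≠ 0) {j : Fin (m + 2)} (hxj : P.x j ≠ 1)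
    (hj : j ≠ 0) : P.s2.s3.x j - 1 = (P.x 0 - P.x j) / ((P.x j - 1) * P.x 0) := by
  have h : P.x j - 1 ≠ 0 := sub_ne_zero.mpr hxj
  rw [s2_s3_x_of_ne_zero _ hj]; field_simp; ring

theorem s2_s3_Q2_ne_zero (hQ2 : P.Q2 ≠ 0) (hq0 : P.q 0 ≠ 0) : P.s2.s3.Q2 ≠ 0 := by
  rw [s2_s3_Q2 P hQ2 hq0]; simpa using hq0

theorem s2_s3_q_zero_ne_zero (hQ2 : P.Q2 ≠ 0) (hq0 : P.q 0 ≠ 0) : P.s2.s3.q 0 ≠ 0 := by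
  rw [s2_s3_q_zero]; exact div_ne_zero hQ2 hq0

theorem s2_s3_cube_e : P.s2.s3.s2.s3.s2.s3.e = P.e := by
  have h12 : (1 : Fin (m + 5)) ≠ 2 := by simp [Fin.ext_iff, Nat.mod_eq_of_lt]
  have h13 : (1 : Fin (m + 5)) ≠ 3 := by simp [Fin.ext_iff, Nat.mod_eq_of_lt]
  have h23 : (2 : Fin (m + 5)) ≠ 3 := by simp [Fin.ext_iff, Nat.mod_eq_of_lt]
  funext j
  calc P.s2.s3.s2.s3.s2.s3.e j = P.e (((swap 1 2 * swap 2 3 : Perm (Fin (m + 5))) ^ 3) j) := by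
        simp only [pow_succ, pow_zero, one_mul, Perm.mul_apply, s2_s3_e]
    _ = P.e j := by rw [swap_mul_swap_pow_three h12 h13 h23, Perm.one_apply]

theorem s2_s3_cube_q (hQ2 : P.Q2 ≠ 0) (hq0 : P.q 0 ≠ 0) : P.s2.s3.s2.s3.s2.s3.q = P.q := by
  have hQ2₁ := s2_s3_Q2_ne_zero P hQ2 hq0
  have hq0₁ := s2_s3_q_zero_ne_zero P hQ2 hq0
  have hQ2₂ := s2_s3_Q2_ne_zero _ hQ2₁ hq0₁
  funext j
  rcases eq_or_ne j 0 with rfl | hj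
  · simp only [s2_s3_q_zero, s2_s3_Q2 _ hQ2₁ hq0₁, s2_s3_Q2 _ hQ2 hq0]
    field_simp
  · simp only [s2_s3_q_zero, s2_s3_Q2 _ hQ2 hq0, s2_s3_q_of_ne_zero _ hQ2₂ hj,
      s2_s3_q_of_ne_zero _ hQ2₁ hj, s2_s3_q_of_ne_zero _ hQ2 hj]
    field_simp

theorem s2_s3_cube_p (hQ2 : P.Q2 ≠ 0) (hq0 : P.q 0 ≠ 0) : P.s2.s3.s2.s3.s2.s3.p = P.p := by
  have hQ2₁ := s2_s3_Q2_ne_zero P hQ2 hq0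
  have hq0₁ := s2_s3_q_zero_ne_zero P hQ2 hq0
  have hQ2₂ := s2_s3_Q2_ne_zero _ hQ2₁ hq0₁
  funext j
  rcases eq_or_ne j 0 with rfl | hj
  · simp only [s2_s3_q_zero, s2_s3_Q2 _ hQ2 hq0, s2_s3_Q1 _ hQ2₁ hq0₁, s2_s3_Q1 _ hQ2 hq0,
      s2_s3_p_zero _ hQ2₂, s2_s3_p_zero _ hQ2]
    field_simp
    ring
  · simp only [s2_s3_q_zero, s2_s3_Q2 _ hQ2 hq0, s2_s3_Q1 _ hQ2₁ hq0₁, s2_s3_Q1 _ hQ2 hq0,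
      s2_s3_p_zero _ hQ2, s2_s3_p_of_ne_zero _ hQ2₂ hj, s2_s3_p_of_ne_zero _ hQ2₁ hj,
      s2_s3_p_of_ne_zero _ hQ2 hj]
    field_simp
    ring

theorem s2_s3_cube_x (hx0 : P.x 0 ≠ 0) (hx : ∀ i, P.x i ≠ 1) (hxj : ∀ j ≠ 0, P.x j ≠ P.x 0) :
    P.s2.s3.s2.s3.s2.s3.x = P.x := by
  have h0 : P.x 0 - 1 ≠ 0 := sub_ne_zero.mpr (hx 0)
  have h0' : 1 - P.x 0 ≠ 0 := sub_ne_zero.mpr (hx 0).symm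
  have x0₂ : P.s2.s3.s2.s3.x 0 = 1 / (1 - P.x 0) := by
    rw [s2_s3_x_zero, s2_s3_x_zero_sub_one _ hx0, s2_s3_x_zero]
    field_simp
    ring
  funext j
  rcases eq_or_ne j 0 with rfl | hj
  · rw [s2_s3_x_zero, x0₂]
    field_simp
    ring
  · have h1 : P.x j - 1 ≠ 0 := sub_ne_zero.mpr (hx j)
    have h2 : P.x j - P.x 0 ≠ 0 := sub_ne_zero.mpr (hxj j hj)
    have h2' : P.x 0 - P.x j ≠ 0 := sub_ne_zero.mpr (hxj j hj).symm
    have xj₂ : P.s2.s3.s2.s3.x j = P.x j / (P.x j - P.x 0) := by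
      rw [s2_s3_x_of_ne_zero _ hj, s2_s3_x_sub_one_of_ne_zero _ hx0 (hx j) hj,
        s2_s3_x_zero_sub_one _ hx0, s2_s3_x_of_ne_zero _ hj, s2_s3_x_zero]
      field_simp
      ring
    rw [s2_s3_x_of_ne_zero _ hj, x0₂, xj₂, div_sub_one h2, sub_sub_cancel]
    field_simp
    ring

end GPt

theorem s2_s3_order_three_general (m : ℕ) (P : GPt m)
    (h0 : Dfd2 P) (h1 : Dfd3 P.s2) (h2 : Dfd2 P.s2.s3) :
    P.s2.s3.s2.s3.s2.s3 = P := by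
  obtain ⟨hQ2, hx⟩ := h0
  have hq0 : P.q 0 ≠ 0 := left_ne_zero_of_mul (h1.1 : P.q 0 / P.Q2 ≠ 0)
  have hx0 : P.x 0 ≠ 0 := left_ne_zero_of_mul (h1.2 : P.x 0 / (P.x 0 - 1) ≠ 0)
  have hxj : ∀ j ≠ 0, P.x j ≠ P.x 0 := by
    intro j hj hj0
    apply h2.2 j
    rw [← sub_eq_zero, s2_s3_x_sub_one_of_ne_zero P hx0 (hx j) hj, hj0, sub_self, zero_div]
  ext1
  · exact s2_s3_cube_e P
  · exact s2_s3_cube_q P hQ2 hq0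
  · exact s2_s3_cube_p P hQ2 hq0
  · exact s2_s3_cube_x P hx0 hx hxj

/-- `(s₂ s₃)³ = id`: at every point where all denominators occurring in the
sixfold composition are nonzero, applying `s₂, s₃` alternately three times each
returns the original point. -/
theorem s2_s3_order_three (m : ℕ) (P : GPt m)
    (h0 : Dfd2 P) (h1 : Dfd3 P.s2) (h2 : Dfd2 P.s2.s3)
    (h3 : Dfd3 P.s2.s3.s2) (h4 : Dfd2 P.s2.s3.s2.s3) (h5 : Dfd3 P.s2.s3.s2.s3.s2) :
    P.s2.s3.s2.s3.s2.s3 = P :=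
  s2_s3_order_three_general m P h0 h1 h2
end
end
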